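/- arXiv:2601.10506 — 2 statements merged into one kernel-verified Lean document; each statement's English description precedes it below -/
import Mathlib

section
/- Let F be a voting method satisfying positive involvement and the Condorcet winner criterion. Let P be a profile in which for all candidates x, x', y, y' in X(P) with x ≠ x' and y ≠ y', if Margin_P(x,x') > Margin_P(y,y'), then Margin_P(x,x') > Margin_P(y,y') + 1. Then F(P) ⊆ D(P), where D(P) is the defensible set of P. -/
open scoped Classical

/-- A preference profile: each voter in a nonempty finite set of voters is assigned
a strict weak order (here given globally on the candidate type) over a nonempty
finite set of candidates. -/
structure Profile (V X : Type*) where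
  voters : Finset V
  voters_nonempty : voters.Nonempty
  cands : Finset X
  cands_nonempty : cands.Nonempty
  /-- `rank i x y` means voter `i` ranks `x` strictly above `y`. -/
  rank : V → X → X → Prop
  irrefl : ∀ i x, ¬ rank i x x
  trans : ∀ i x y z, rank i x y → rank i y z → rank i x z
  incomp_trans : ∀ i x y z, (¬ rank i x y ∧ ¬ rank i y x) →
    (¬ rank i y z ∧ ¬ rank i z y) → (¬ rank i x z ∧ ¬ rank i z x)

namespace Profile

variable {V X : Type*}

/-- The margin of `x` vs. `y`: the number of voters ranking `x` above `y`
minus the number of voters ranking `y` above `x`. -/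
noncomputable def margin (P : Profile V X) (x y : X) : ℤ :=
  ((P.voters.filter fun i => P.rank i x y).card : ℤ) -
    ((P.voters.filter fun i => P.rank i y x).card : ℤ)

/-- The sum of two profiles (intended for use when `P.voters` and `Q.voters` are
disjoint and `P.cands = Q.cands`). -/
noncomputable def add (P Q : Profile V X) : Profile V X where
  voters := P.voters ∪ Q.voters
  voters_nonempty := P.voters_nonempty.mono Finset.subset_union_left
  cands := P.cands
  cands_nonempty := P.cands_nonempty
  rank i x y := if i ∈ P.voters then P.rank i x y else Q.rank i x y
  irrefl := by
    intro i x
    by_cases h : i ∈ P.voters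
    · simp only [if_pos h]; exact P.irrefl i x
    · simp only [if_neg h]; exact Q.irrefl i x
  trans := by
    intro i x y z
    by_cases h : i ∈ P.voters
    · simp only [if_pos h]; exact P.trans i x y z
    · simp only [if_neg h]; exact Q.trans i x y z
  incomp_trans := by
    intro i x y z
    by_cases h : i ∈ P.voters
    · simp only [if_pos h]; exact P.incomp_trans i x y z
    · simp only [if_neg h]; exact Q.incomp_trans i x y z

end Profile

variable {V X : Type*}

/-- `F` is a voting method: it assigns to each profile a nonempty set of winners
among the candidates. -/
def IsVotingMethod (F : Profile V X → Finset X) : Prop :=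
  ∀ P : Profile V X, (F P).Nonempty ∧ F P ⊆ P.cands

/-- The Condorcet winner criterion. -/
def CondorcetWinnerCriterion (F : Profile V X → Finset X) : Prop :=
  ∀ P : Profile V X, ∀ x ∈ P.cands,
    (∀ y ∈ P.cands, y ≠ x → 0 < P.margin x y) → F P = {x}

/-- The Condorcet loser criterion. -/
def CondorcetLoserCriterion (F : Profile V X → Finset X) : Prop :=
  ∀ P : Profile V X, ∀ x ∈ P.cands,
    (∀ y ∈ P.cands, y ≠ x → 0 < P.margin y x) → x ∉ F P

/-- Every voter of `Q` ranks `x` uniquely first (strictly above every other candidate). -/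
def RanksUniquelyFirst (Q : Profile V X) (x : X) : Prop :=
  ∀ i ∈ Q.voters, ∀ y ∈ Q.cands, y ≠ x → Q.rank i x y

/-- Every voter of `Q` ranks `x` uniquely last (strictly below every other candidate). -/
def RanksUniquelyLast (Q : Profile V X) (x : X) : Prop :=
  ∀ i ∈ Q.voters, ∀ y ∈ Q.cands, y ≠ x → Q.rank i y x

/-- Positive involvement. -/
def PositiveInvolvement (F : Profile V X → Finset X) : Prop :=
  ∀ (P Px : Profile V X), ∀ x ∈ P.cands,
    Disjoint P.voters Px.voters → Px.cands = P.cands → Px.voters.card = 1 →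
    RanksUniquelyFirst Px x → x ∈ F P → x ∈ F (P.add Px)

/-- Negative involvement. -/
def NegativeInvolvement (F : Profile V X → Finset X) : Prop :=
  ∀ (P Px : Profile V X), ∀ x ∈ P.cands,
    Disjoint P.voters Px.voters → Px.cands = P.cands → Px.voters.card = 1 →
    RanksUniquelyLast Px x → x ∉ F P → x ∉ F (P.add Px)

/-- Resolvability: any tied winner can be made the unique winner by adding a single voter. -/
def Resolvability (F : Profile V X → Finset X) : Prop :=
  ∀ P : Profile V X, 1 < (F P).card → ∀ x ∈ F P,
    ∃ S : Profile V X, S.voters.card = 1 ∧ Disjoint P.voters S.voters ∧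
      S.cands = P.cands ∧ F (P.add S) = {x}

/-- `n`-voter resolvability: any tied winner can be made the unique winner by adding
a set of at most `n` voters. -/
def NVoterResolvability (n : ℕ) (F : Profile V X → Finset X) : Prop :=
  ∀ P : Profile V X, 1 < (F P).card → ∀ x ∈ F P,
    ∃ Q : Profile V X, Q.voters.card ≤ n ∧ Disjoint P.voters Q.voters ∧
      Q.cands = P.cands ∧ F (P.add Q) = {x}

/-- The defensible set of a profile. -/
def defensibleSet (P : Profile V X) : Set X :=
  {x | x ∈ P.cands ∧ ∀ y ∈ P.cands, ∃ z ∈ P.cands, P.margin y x ≤ P.margin z y}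

/-
Suppose `x ∈ F P` but `x` is not defensible: some `y` has
`margin z y < margin y x` for every `z`, so `m := margin y x` is positive and, by the
separation hypothesis, `margin y z ≥ 2 - m` for every `z`. Add `m - 1` voters with the
ballot `x > y > everyone else`. By positive involvement `x` still wins, but now
`margin y x = 1` and `margin y z ≥ 1` for all other `z`, so `y` is the Condorcet winner,
a contradiction.
-/

namespace Profile

theorem margin_self (P : Profile V X) (a : X) : P.margin a a = 0 := by
  simp [margin]

theorem margin_swap (P : Profile V X) (a b : X) : P.margin b a = -P.margin a b := by
  simp [margin]

theorem filter_add_rank {P Q : Profile V X} (h : Disjoint P.voters Q.voters) (a b : X) :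
    (P.add Q).voters.filter (fun i => (P.add Q).rank i a b) =
      P.voters.filter (fun i => P.rank i a b) ∪ Q.voters.filter (fun i => Q.rank i a b) := by
  ext i
  rw [Finset.mem_filter, Finset.mem_union, Finset.mem_filter, Finset.mem_filter]
  by_cases hi : i ∈ P.voters
  · have hiQ : i ∉ Q.voters := Finset.disjoint_left.mp h hi
    simp [add, hi, hiQ]
  · simp [add, hi]

theorem margin_add {P Q : Profile V X} (h : Disjoint P.voters Q.voters) (a b : X) :
    (P.add Q).margin a b = P.margin a b + Q.margin a b := by
  have hd : ∀ c d : X, Disjoint (P.voters.filter fun i => P.rank i c d)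
      (Q.voters.filter fun i => Q.rank i c d) :=
    fun _ _ => h.mono (Finset.filter_subset _ _) (Finset.filter_subset _ _)
  simp only [margin, filter_add_rank h, Finset.card_union_of_disjoint (hd _ _)]
  push_cast
  ring

/-- The one-voter profile in which voter `i` ranks `a` above `b` iff `level a < level b`. -/
noncomputable def single (i : V) (cands : Finset X) (hc : cands.Nonempty) (level : X → ℕ) :
    Profile V X where
  voters := {i}
  voters_nonempty := Finset.singleton_nonempty i
  cands := cands
  cands_nonempty := hc
  rank _ a b := level a < level b
  irrefl _ _ := lt_irrefl _
  trans _ _ _ _ := lt_trans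
  incomp_trans _ _ _ _ h₁ h₂ := by omega

theorem margin_single (i : V) (cands : Finset X) (hc : cands.Nonempty) (level : X → ℕ)
    (a b : X) :
    (single i cands hc level).margin a b = Int.sign ((level b : ℤ) - level a) := by
  rcases lt_trichotomy (level a) (level b) with h | h | h
  · have : (0 : ℤ) < level b - level a := by omega
    simp [margin, single, Finset.filter_singleton, h, h.not_gt, Int.sign_eq_one_of_pos this]
  · simp [margin, single, Finset.filter_singleton, h]
  · have : (level b : ℤ) - level a < 0 := by omega
    simp [margin, single, Finset.filter_singleton, h, h.not_gt, Int.sign_eq_neg_one_of_neg this]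

end Profile

open Profile

theorem PositiveInvolvement.exists_add_ballots [Infinite V] {F : Profile V X → Finset X}
    (hPI : PositiveInvolvement F) {P : Profile V X} {x : X} (hx : x ∈ P.cands)
    (hxF : x ∈ F P) (level : X → ℕ) (hlevel : ∀ a, a ≠ x → level x < level a) (k : ℕ) :
    ∃ R : Profile V X, R.cands = P.cands ∧
      (∀ a b, R.margin a b = P.margin a b + k * Int.sign ((level b : ℤ) - level a)) ∧
      x ∈ F R := by
  induction k with
  | zero => exact ⟨P, rfl, by simp, hxF⟩
  | succ k ih =>
    obtain ⟨R, hRc, hRm, hxR⟩ := ih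
    obtain ⟨i, hi⟩ := R.voters.exists_notMem
    set B := single i R.cands R.cands_nonempty level
    have hdisj : Disjoint R.voters B.voters := Finset.disjoint_singleton_right.mpr hi
    refine ⟨R.add B, hRc, fun a b => ?_, ?_⟩
    · rw [margin_add hdisj, hRm, margin_single]
      push_cast
      ring
    · exact hPI R B x (hRc ▸ hx) hdisj rfl (Finset.card_singleton i)
        (fun _ _ a _ hax => hlevel a hax) hxR

noncomputable def firstSecondLevel (x y : X) (a : X) : ℕ :=
  if a = x then 0 else if a = y then 1 else 2

theorem firstSecondLevel_first_lt {x y a : X} (ha : a ≠ x) :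
    firstSecondLevel x y x < firstSecondLevel x y a := by
  simp only [firstSecondLevel, if_neg ha]
  split_ifs <;> omega

theorem defensible_of_posInv_condorcetWinner_general
    {V X : Type*} [Infinite V]
    (F : Profile V X → Finset X) (hF : IsVotingMethod F)
    (hPI : PositiveInvolvement F) (hCW : CondorcetWinnerCriterion F)
    (P : Profile V X)
    (hsep : ∀ x ∈ P.cands, ∀ x' ∈ P.cands, ∀ y ∈ P.cands, ∀ y' ∈ P.cands,
      x ≠ x' → y ≠ y' → P.margin y y' < P.margin x x' →
      P.margin y y' + 1 < P.margin x x') :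
    ↑(F P) ⊆ defensibleSet P := by
  intro x hxF
  have hx : x ∈ P.cands := (hF P).2 hxF
  refine ⟨hx, ?_⟩
  by_contra! hndef
  obtain ⟨y, hy, hyx⟩ := hndef
  have hpos : 0 < P.margin y x := by simpa [margin_self] using hyx y hy
  have hxy : x ≠ y := by rintro rfl; simp [margin_self] at hpos
  obtain ⟨R, hRc, hRm, hxR⟩ := hPI.exists_add_ballots hx hxF (firstSecondLevel x y)
    (fun _ => firstSecondLevel_first_lt) (P.margin y x - 1).toNat
  have hyR : F R = {y} := by
    refine hCW R y (hRc ▸ hy) fun z hz hzy => ?_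
    rw [hRc] at hz
    rw [hRm, Int.toNat_of_nonneg (by omega)]
    by_cases hzx : z = x
    · rw [hzx]
      simp [firstSecondLevel, hxy.symm]
    · have hgap := hsep y hy x hx z hz y hy hxy.symm hzy (hyx z hz)
      simp [firstSecondLevel, hzx, hzy, hxy.symm, P.margin_swap z y] at hgap ⊢
      omega
  exact hxy (Finset.mem_singleton.mp (hyR ▸ hxR))

/-- Lemma on positive involvement, the Condorcet winner criterion,
and the defensible set: if `F` is a voting method satisfying positive involvement and
the Condorcet winner criterion, and `P` is a profile in which any two distinct margins
between distinct candidates differ by more than 1, then `F P` is contained in the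
defensible set of `P`. -/
theorem defensible_of_posInv_condorcetWinner
    {V X : Type*} [Infinite V] [Infinite X]
    (F : Profile V X → Finset X) (hF : IsVotingMethod F)
    (hPI : PositiveInvolvement F) (hCW : CondorcetWinnerCriterion F)
    (P : Profile V X)
    (hsep : ∀ x ∈ P.cands, ∀ x' ∈ P.cands, ∀ y ∈ P.cands, ∀ y' ∈ P.cands,
      x ≠ x' → y ≠ y' → P.margin y y' < P.margin x x' →
      P.margin y y' + 1 < P.margin x x') :
    ↑(F P) ⊆ defensibleSet P :=
  defensible_of_posInv_condorcetWinner_general F hF hPI hCW P hsep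
end

section
/- Let F be a voting method satisfying negative involvement and the Condorcet winner criterion. Let P be a profile in which for all candidates x, x', y, y' in X(P) with x ≠ x' and y ≠ y', if Margin_P(x,x') > Margin_P(y,y'), then Margin_P(x,x') > Margin_P(y,y') + 1. Additionally assume that for each x ∈ X(P) \ D(P), there is a y ∈ X(P) such that for every z ∈ X(P), Margin_P(z,y) < Margin_P(y,x), and, where k = max{Margin_P(z,y) : z ∈ X(P), z ≠ y}, there are at least k + 1 voters in P whose rankings have y uniquely second-to-last, followed by x uniquely last. Then F(P) ⊆ D(P), where D(P) is the defensible set of P. -/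
open scoped Classical

variable {V X : Type*}

section AuxLemmas

lemma Profile.asymm (P : Profile V X) (i : V) {a b : X} (h : P.rank i a b) :
    ¬ P.rank i b a := fun h' => P.irrefl i a (P.trans i a b a h h')

lemma Profile.margin_neg' (P : Profile V X) (a b : X) :
    P.margin a b = - P.margin b a := by
  unfold Profile.margin; ring

lemma Profile.ext' {P Q : Profile V X} (hv : P.voters = Q.voters)
    (hc : P.cands = Q.cands) (hr : P.rank = Q.rank) : P = Q := by
  cases P; cases Q
  cases hv; cases hc; cases hr
  rfl

/-- The profile obtained from `P` by removing the voters in `T`. -/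
noncomputable def Profile.sub (P : Profile V X) (T : Finset V)
    (h : (P.voters \ T).Nonempty) : Profile V X :=
  { P with voters := P.voters \ T, voters_nonempty := h }

/-- The single-voter profile on voter `i` with `P`'s ranking and candidates. -/
noncomputable def Profile.single_s1 (P : Profile V X) (i : V) : Profile V X :=
  { P with voters := {i}, voters_nonempty := Finset.singleton_nonempty i }

lemma filter_sdiff_card {α : Type*} (s t : Finset α) (p : α → Prop)
    (hts : t ⊆ s) (hall : ∀ i ∈ t, p i) :
    (((s \ t).filter p).card : ℤ) = ((s.filter p).card : ℤ) - t.card := by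
  have h1 : (s \ t).filter p = s.filter p \ t := by
    ext a; simp only [Finset.mem_filter, Finset.mem_sdiff]; tauto
  have h2 : t ⊆ s.filter p := fun a ha =>
    Finset.mem_filter.2 ⟨hts ha, hall a ha⟩
  rw [h1, Finset.card_sdiff_of_subset h2]
  have := Finset.card_le_card h2
  omega

lemma filter_sdiff_card_none {α : Type*} (s t : Finset α) (p : α → Prop)
    (hnone : ∀ i ∈ t, ¬ p i) :
    ((s \ t).filter p).card = (s.filter p).card := by
  congr 1
  ext a; simp only [Finset.mem_filter, Finset.mem_sdiff]
  constructor
  · rintro ⟨⟨ha, -⟩, hp⟩; exact ⟨ha, hp⟩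
  · rintro ⟨ha, hp⟩; exact ⟨⟨ha, fun hat => hnone a hat hp⟩, hp⟩

lemma Profile.margin_sub (P : Profile V X) (T : Finset V) (hT : T ⊆ P.voters)
    (h : (P.voters \ T).Nonempty) (a b : X) (hall : ∀ i ∈ T, P.rank i a b) :
    (P.sub T h).margin a b = P.margin a b - T.card := by
  have hnone : ∀ i ∈ T, ¬ P.rank i b a := fun i hi => P.asymm i (hall i hi)
  unfold Profile.margin Profile.sub
  simp only
  rw [filter_sdiff_card P.voters T _ hT hall,
    filter_sdiff_card_none P.voters T _ hnone]
  ring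

end AuxLemmas

/-- Lemma on negative involvement, the Condorcet winner criterion,
and the defensible set. -/
theorem defensible_of_negInv_condorcetWinner
    {V X : Type*} [Infinite V] [Infinite X]
    (F : Profile V X → Finset X) (hF : IsVotingMethod F)
    (hNI : NegativeInvolvement F) (hCW : CondorcetWinnerCriterion F)
    (P : Profile V X)
    (hsep : ∀ x ∈ P.cands, ∀ x' ∈ P.cands, ∀ y ∈ P.cands, ∀ y' ∈ P.cands,
      x ≠ x' → y ≠ y' → P.margin y y' < P.margin x x' →
      P.margin y y' + 1 < P.margin x x')
    (hextra : ∀ x ∈ P.cands, x ∉ defensibleSet P →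
      ∃ y ∈ P.cands, (∀ z ∈ P.cands, P.margin z y < P.margin y x) ∧
        ∃ k : ℤ, (∀ z ∈ P.cands, z ≠ y → P.margin z y ≤ k) ∧
          (∃ z ∈ P.cands, z ≠ y ∧ P.margin z y = k) ∧
          k + 1 ≤ ((P.voters.filter fun i => P.rank i y x ∧
            ∀ z ∈ P.cands, z ≠ x → z ≠ y → P.rank i z y).card : ℤ)) :
    ↑(F P) ⊆ defensibleSet P := by
  intro x hx
  by_contra hxD
  have hxF : x ∈ F P := hx
  have hxc : x ∈ P.cands := (hF P).2 hxF
  obtain ⟨y, hyc, hbeat, k, hkmax, ⟨z₀, hz₀c, hz₀y, hz₀k⟩, hcount⟩ :=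
    hextra x hxc hxD
  set S := P.voters.filter (fun i => P.rank i y x ∧
    ∀ z ∈ P.cands, z ≠ x → z ≠ y → P.rank i z y) with hS
  have hyx : y ≠ x := by
    intro h
    subst h
    exact absurd (hbeat y hyc) (lt_irrefl _)
  have hmyx_pos : 0 < P.margin y x := by
    have h1 := hbeat x hxc
    have h2 := P.margin_neg' x y
    linarith
  set m : ℕ := (k + 1).toNat with hm
  have hm_le_S : m ≤ S.card := Int.toNat_le.2 hcount
  have hm_ge : k + 1 ≤ (m : ℤ) := Int.self_le_toNat _
  -- membership facts for S
  have hSmem : ∀ i ∈ S, P.rank i y x ∧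
      ∀ z ∈ P.cands, z ≠ x → z ≠ y → P.rank i z y := by
    intro i hi
    exact (Finset.mem_filter.1 hi).2
  have hSV : S ⊆ P.voters := Finset.filter_subset _ _
  -- m < number of voters
  have hm_lt_voters : m < P.voters.card := by
    by_cases hk : k < 0
    · have : m = 0 := by
        rw [hm]; omega
      rw [this]
      exact Finset.card_pos.2 P.voters_nonempty
    · push_neg at hk
      have hmk : (m : ℤ) = k + 1 := Int.toNat_of_nonneg (by omega)
      set A := P.voters.filter (fun i => P.rank i z₀ y) with hA
      set B := P.voters.filter (fun i => P.rank i y z₀) with hB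
      have hAB : Disjoint A B := by
        rw [Finset.disjoint_left]
        intro a haA haB
        exact P.asymm a (Finset.mem_filter.1 haA).2 (Finset.mem_filter.1 haB).2
      have hABV : A.card + B.card ≤ P.voters.card := by
        rw [← Finset.card_union_of_disjoint hAB]
        exact Finset.card_le_card (Finset.union_subset
          (Finset.filter_subset _ _) (Finset.filter_subset _ _))
      have hmarg : (A.card : ℤ) - B.card = k := hz₀k
      by_cases hz₀x : z₀ = x
      · -- S ⊆ B
        have hSB : S ⊆ B := by
          intro i hi
          have h := (hSmem i hi).1
          exact Finset.mem_filter.2 ⟨hSV hi, by rw [hz₀x]; exact h⟩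
        have := Finset.card_le_card hSB
        have h1 : (k : ℤ) + 1 ≤ S.card := hcount
        have h2 : (S.card : ℤ) ≤ B.card := by exact_mod_cast this
        have h3 : (A.card : ℤ) + B.card ≤ P.voters.card := by exact_mod_cast hABV
        have : (k : ℤ) + 2 ≤ P.voters.card := by linarith
        omega
      · -- S ⊆ A
        have hSA : S ⊆ A := by
          intro i hi
          exact Finset.mem_filter.2 ⟨hSV hi, (hSmem i hi).2 z₀ hz₀c hz₀x hz₀y⟩
        have := Finset.card_le_card hSA
        have h1 : (k : ℤ) + 1 ≤ S.card := hcount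
        have h2 : (S.card : ℤ) ≤ A.card := by exact_mod_cast this
        have h3 : (A.card : ℤ) + B.card ≤ P.voters.card := by exact_mod_cast hABV
        have h4 : (0 : ℤ) ≤ B.card := by positivity
        have : (k : ℤ) + 2 ≤ P.voters.card := by linarith
        omega
  obtain ⟨T₀, hT₀S, hT₀card⟩ := Finset.exists_subset_card_eq hm_le_S
  have hT₀V : T₀ ⊆ P.voters := hT₀S.trans hSV
  have hne : ∀ T, T ⊆ T₀ → (P.voters \ T).Nonempty := by
    intro T hTT
    have hTV : T ⊆ P.voters := hTT.trans hT₀V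
    have h1 : T.card ≤ m := hT₀card ▸ Finset.card_le_card hTT
    rw [← Finset.card_pos, Finset.card_sdiff_of_subset hTV]
    omega
  have hlast : ∀ i ∈ T₀, ∀ w ∈ P.cands, w ≠ x → P.rank i w x := by
    intro i hi w hw hwx
    have hi' := hSmem i (hT₀S hi)
    by_cases hwy : w = y
    · subst hwy; exact hi'.1
    · exact P.trans i w y x (hi'.2 w hw hwx hwy) hi'.1
  -- induction: removing voters of T ⊆ T₀ keeps x a winner
  have key : ∀ n : ℕ, ∀ T, ∀ hT : T ⊆ T₀, T.card = n →
      x ∈ F (P.sub T (hne T hT)) := by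
    intro n
    induction n with
    | zero =>
      intro T hT hc
      have hTe : T = ∅ := Finset.card_eq_zero.1 hc
      subst hTe
      have hPP : P.sub ∅ (hne ∅ hT) = P :=
        Profile.ext' Finset.sdiff_empty rfl rfl
      rw [hPP]
      exact hxF
    | succ n ih =>
      intro T hT hc
      obtain ⟨i, hi⟩ := Finset.card_pos.1 (by omega : 0 < T.card)
      have hiT₀ : i ∈ T₀ := hT hi
      have hiV : i ∈ P.voters := hT₀V hiT₀
      have hT' : T.erase i ⊆ T₀ := (Finset.erase_subset i T).trans hT
      have hT'c : (T.erase i).card = n := by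
        rw [Finset.card_erase_of_mem hi]; omega
      have hxT' := ih (T.erase i) hT' hT'c
      have heq : (P.sub T (hne T hT)).add (P.single_s1 i) =
          P.sub (T.erase i) (hne _ hT') := by
        apply Profile.ext'
        · show (P.voters \ T) ∪ {i} = P.voters \ T.erase i
          ext a
          simp only [Finset.mem_union, Finset.mem_sdiff, Finset.mem_singleton,
            Finset.mem_erase]
          by_cases hai : a = i
          · subst hai
            simp [hiV, hi]
          · simp only [hai]
            tauto
        · rfl
        · funext j a b
          show (if j ∈ P.voters \ T then P.rank j a b else P.rank j a b) =
            P.rank j a b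
          exact ite_self _
      by_contra hxT
      have hdisj : Disjoint (P.sub T (hne T hT)).voters (P.single_s1 i).voters := by
        show Disjoint (P.voters \ T) {i}
        rw [Finset.disjoint_singleton_right, Finset.mem_sdiff]
        tauto
      have hlastQ : RanksUniquelyLast (P.single_s1 i) x := by
        intro j hj w hw hwx
        have hji : j = i := Finset.mem_singleton.1 hj
        rw [hji]
        exact hlast i hiT₀ w hw hwx
      have hni := hNI (P.sub T (hne T hT)) (P.single_s1 i) x hxc hdisj rfl
        (Finset.card_singleton i) hlastQ hxT
      rw [heq] at hni
      exact hni hxT'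
  have hfin := key m T₀ (subset_refl T₀) hT₀card
  -- y is a Condorcet winner in P.sub T₀
  set P' := P.sub T₀ (hne T₀ (subset_refl T₀)) with hP'
  have hCond : ∀ z ∈ P'.cands, z ≠ y → 0 < P'.margin y z := by
    intro z hz hzy
    by_cases hzx : z = x
    · subst hzx
      have hall : ∀ i ∈ T₀, P.rank i y z := fun i hi => (hSmem i (hT₀S hi)).1
      rw [P.margin_sub T₀ hT₀V _ y z hall, hT₀card]
      by_cases hk : k < 0
      · have : m = 0 := by rw [hm]; omega
        rw [this]
        push_cast
        linarith
      · push_neg at hk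
        have hmk : (m : ℤ) = k + 1 := Int.toNat_of_nonneg (by omega)
        have hsep' := hsep y hyc z hz z₀ hz₀c y hyc (hyx) hz₀y
          (by rw [hz₀k]; exact (hz₀k ▸ hbeat z₀ hz₀c))
        rw [hz₀k] at hsep'
        rw [hmk]
        linarith
    · have hall : ∀ i ∈ T₀, P.rank i z y := fun i hi =>
        (hSmem i (hT₀S hi)).2 z hz hzx hzy
      have hsub := P.margin_sub T₀ hT₀V (hne T₀ (subset_refl T₀)) z y hall
      have hneg : P'.margin y z = - P'.margin z y := P'.margin_neg' y z
      rw [hneg, hsub, hT₀card]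
      have hzk := hkmax z hz hzy
      linarith
  have hFy : F P' = {y} := hCW P' y hyc hCond
  rw [hFy] at hfin
  exact hyx (Finset.mem_singleton.1 hfin).symm
end
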